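/- Let X ~ ESN(μ, σ², ε) with μ > 0, z = max(X, 0), and z̄ = min(z, c) for c > μ. Then E[z - z̄] = (1-ε)²φ((c-μ)/((1-ε)σ))·σ - (1-ε)(1 - Φ((c-μ)/((1-ε)σ)))·(c-μ). In particular, setting ε = 0 recovers the rectified Gaussian reduction formula. -/

import Mathlib

/-!
On `{x > c}` the gap `max x 0 - min (max x 0) c` is `x - c`, and it vanishes elsewhere because
`0 ≤ c`. Since `μ ≤ c`, only the right half of the ESN density, a normal density of scale
`(1 - ε) σ`, is seen there. The substitution `t = (x - μ) / ((1 - ε) σ)` reduces the integral to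
the partial moment `∫_{t > a} (t - a) φ(t) dt = φ(a) - a (1 - Φ(a))`, which follows from `φ' = -t φ`.
-/

open MeasureTheory

/-- standard normal pdf φ -/
noncomputable def stdnpdf (x : ℝ) : ℝ := Real.exp (-(x ^ 2) / 2) / Real.sqrt (2 * Real.pi)

/-- standard normal cdf Φ -/
noncomputable def stdncdf (x : ℝ) : ℝ := ∫ t in Set.Iic x, stdnpdf t

/-- density of the epsilon-skew-normal distribution ESN(μ, σ², ε). -/
noncomputable def esnPdf (μ σ ε x : ℝ) : ℝ :=
  if x < μ then stdnpdf ((x - μ) / (σ * (1 + ε))) / σ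
  else stdnpdf ((x - μ) / (σ * (1 - ε))) / σ

open Set Filter Topology

lemma stdnpdf_eq (x : ℝ) :
    stdnpdf x = Real.exp (-2⁻¹ * x ^ 2) / Real.sqrt (2 * Real.pi) := by
  rw [stdnpdf]; ring_nf

lemma integrable_stdnpdf : Integrable stdnpdf := by
  rw [funext stdnpdf_eq]
  exact (integrable_exp_neg_mul_sq (by norm_num)).div_const _

lemma integrable_id_mul_stdnpdf : Integrable fun x => x * stdnpdf x := by
  simpa only [stdnpdf_eq, mul_div_assoc] using
    (integrable_mul_exp_neg_mul_sq (by norm_num : (0 : ℝ) < 2⁻¹)).div_const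
      (Real.sqrt (2 * Real.pi))

lemma integral_stdnpdf : ∫ x, stdnpdf x = 1 := by
  simp_rw [stdnpdf_eq]
  rw [integral_div, integral_gaussian, div_inv_eq_mul, mul_comm]
  exact div_self (by positivity)

lemma hasDerivAt_stdnpdf (x : ℝ) : HasDerivAt stdnpdf (-x * stdnpdf x) x := by
  have h := (((hasDerivAt_pow 2 x).fun_neg.div_const 2).exp).div_const (Real.sqrt (2 * Real.pi))
  exact h.congr_deriv (by unfold stdnpdf; push_cast; ring)

lemma tendsto_stdnpdf_atTop : Tendsto stdnpdf atTop (𝓝 0) := by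
  have h : Tendsto (fun x : ℝ => -(x ^ 2) / 2) atTop atBot :=
    (tendsto_neg_atBot_iff.mpr (tendsto_pow_atTop two_ne_zero)).atBot_div_const two_pos
  rw [← zero_div (Real.sqrt (2 * Real.pi))]
  exact (Real.tendsto_exp_atBot.comp h).div_const _

lemma integral_Ioi_id_mul_stdnpdf (a : ℝ) : ∫ t in Ioi a, t * stdnpdf t = stdnpdf a := by
  have h := integral_Ioi_of_hasDerivAt_of_tendsto' (f := fun t => -stdnpdf t) (a := a)
    (fun x _ => by simpa using (hasDerivAt_stdnpdf x).fun_neg)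
    integrable_id_mul_stdnpdf.integrableOn (by simpa using tendsto_stdnpdf_atTop.neg)
  simpa using h

lemma integral_Ioi_stdnpdf (a : ℝ) : ∫ t in Ioi a, stdnpdf t = 1 - stdncdf a := by
  rw [stdncdf, ← integral_stdnpdf,
    ← intervalIntegral.integral_Iic_add_Ioi integrable_stdnpdf.integrableOn
      integrable_stdnpdf.integrableOn]
  ring

lemma integral_Ioi_sub_mul_stdnpdf (a : ℝ) :
    ∫ t in Ioi a, (t - a) * stdnpdf t = stdnpdf a - a * (1 - stdncdf a) := by
  simp_rw [sub_mul]
  rw [integral_sub integrable_id_mul_stdnpdf.integrableOn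
    (integrable_stdnpdf.const_mul a).integrableOn, integral_const_mul,
    integral_Ioi_id_mul_stdnpdf, integral_Ioi_stdnpdf]

lemma setIntegral_Ioi_comp_sub_div {E : Type*} [NormedAddCommGroup E] [NormedSpace ℝ E]
    (g : ℝ → E) {k : ℝ} (hk : 0 < k) (μ c : ℝ) :
    ∫ x in Ioi c, g ((x - μ) / k) = k • ∫ t in Ioi ((c - μ) / k), g t := by
  have himage : (fun t => k * t + μ) '' Ioi ((c - μ) / k) = Ioi c := by
    rw [← image_image (· + μ) (k * ·), image_mul_left_Ioi hk, image_add_const_Ioi,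
      mul_div_cancel₀ _ hk.ne', sub_add_cancel]
  rw [← himage, integral_image_eq_integral_abs_deriv_smul measurableSet_Ioi
    (fun t _ => ((hasDerivAt_id' t).const_mul k |>.add_const μ).hasDerivWithinAt)
    (fun s _ t _ h => by simpa [hk.ne'] using h), ← integral_smul]
  simp [abs_of_pos hk, hk.ne']

lemma integral_Ioi_sub_mul_stdnpdf_sub_div {k : ℝ} (hk : 0 < k) (μ c : ℝ) :
    ∫ x in Ioi c, (x - c) * stdnpdf ((x - μ) / k)
      = k ^ 2 * (stdnpdf ((c - μ) / k) - (c - μ) / k * (1 - stdncdf ((c - μ) / k))) := by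
  have hsubst := setIntegral_Ioi_comp_sub_div (fun t => (t - (c - μ) / k) * stdnpdf t) hk μ c
  rw [integral_Ioi_sub_mul_stdnpdf, smul_eq_mul] at hsubst
  calc ∫ x in Ioi c, (x - c) * stdnpdf ((x - μ) / k)
      = ∫ x in Ioi c, k * (((x - μ) / k - (c - μ) / k) * stdnpdf ((x - μ) / k)) := by
        congr 1; ext x; field_simp; ring
    _ = _ := by rw [integral_const_mul, hsubst]; ring

lemma max_sub_min_max_eq_max_sub {c : ℝ} (hc : 0 ≤ c) (x : ℝ) :
    max x 0 - min (max x 0) c = max (x - c) 0 := by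
  grind

lemma integral_max_sub_zero_mul (f : ℝ → ℝ) (c : ℝ) :
    ∫ x, max (x - c) 0 * f x = ∫ x in Ioi c, (x - c) * f x := by
  rw [← integral_indicator measurableSet_Ioi]
  congr 1; ext x
  by_cases hx : c < x
  · simp [indicator_of_mem (show x ∈ Ioi c from hx), hx.le]
  · simp [hx, not_lt.mp hx]

lemma esnPdf_of_le {μ σ ε x : ℝ} (hx : μ ≤ x) :
    esnPdf μ σ ε x = stdnpdf ((x - μ) / (σ * (1 - ε))) / σ :=
  if_neg hx.not_gt

lemma integral_esnPdf_reduction {μ σ ε c : ℝ} (hσ : 0 < σ) (hε : ε < 1) (hc : 0 ≤ c)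
    (hμc : μ ≤ c) :
    ∫ x, (max x 0 - min (max x 0) c) * esnPdf μ σ ε x
      = (1 - ε) ^ 2 * stdnpdf ((c - μ) / ((1 - ε) * σ)) * σ
        - (1 - ε) * (1 - stdncdf ((c - μ) / ((1 - ε) * σ))) * (c - μ) := by
  have hk : 0 < (1 - ε) * σ := mul_pos (sub_pos.mpr hε) hσ
  calc ∫ x, (max x 0 - min (max x 0) c) * esnPdf μ σ ε x
      = ∫ x in Ioi c, (x - c) * esnPdf μ σ ε x := by
        simp_rw [max_sub_min_max_eq_max_sub hc]; exact integral_max_sub_zero_mul _ c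
    _ = σ⁻¹ * ∫ x in Ioi c, (x - c) * stdnpdf ((x - μ) / ((1 - ε) * σ)) := by
        rw [← integral_const_mul]
        refine setIntegral_congr_fun measurableSet_Ioi fun x hx => ?_
        rw [esnPdf_of_le (hμc.trans hx.out.le), mul_comm σ]
        ring
    _ = _ := by
        rw [integral_Ioi_sub_mul_stdnpdf_sub_div hk]
        set a := (c - μ) / ((1 - ε) * σ)
        rw [show c - μ = (1 - ε) * σ * a from (mul_div_cancel₀ _ hk.ne').symm]
        field_simp

theorem esn_activation_reduction_general (μ σ ε c : ℝ) (hμ : 0 < μ) (hσ : 0 < σ)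
    (hε₂ : ε < 1) (hc : μ < c) :
    ((∫ x : ℝ, (max x 0 - min (max x 0) c) * esnPdf μ σ ε x)
        = (1 - ε) ^ 2 * stdnpdf ((c - μ) / ((1 - ε) * σ)) * σ
          - (1 - ε) * (1 - stdncdf ((c - μ) / ((1 - ε) * σ))) * (c - μ))
    ∧ ((∫ x : ℝ, (max x 0 - min (max x 0) c) * esnPdf μ σ 0 x)
        = stdnpdf ((c - μ) / σ) * σ - (1 - stdncdf ((c - μ) / σ)) * (c - μ)) := by
  have hc₀ : 0 ≤ c := (hμ.trans hc).le
  refine ⟨integral_esnPdf_reduction hσ hε₂ hc₀ hc.le, ?_⟩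
  simpa using integral_esnPdf_reduction (ε := 0) hσ one_pos hc₀ hc.le

/-- For X ~ ESN(μ, σ², ε) with μ > 0, z = max(X, 0), z̄ = min(z, c), c > μ,
    E[z - z̄] = (1-ε)²φ((c-μ)/((1-ε)σ))·σ - (1-ε)(1 - Φ((c-μ)/((1-ε)σ)))·(c-μ).
    In particular, setting ε = 0 recovers the rectified-Gaussian reduction formula. -/
theorem esn_activation_reduction (μ σ ε c : ℝ) (hμ : 0 < μ) (hσ : 0 < σ)
    (hε₁ : -1 < ε) (hε₂ : ε < 1) (hc : μ < c) :
    ((∫ x : ℝ, (max x 0 - min (max x 0) c) * esnPdf μ σ ε x)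
        = (1 - ε) ^ 2 * stdnpdf ((c - μ) / ((1 - ε) * σ)) * σ
          - (1 - ε) * (1 - stdncdf ((c - μ) / ((1 - ε) * σ))) * (c - μ))
    ∧ ((∫ x : ℝ, (max x 0 - min (max x 0) c) * esnPdf μ σ 0 x)
        = stdnpdf ((c - μ) / σ) * σ - (1 - stdncdf ((c - μ) / σ)) * (c - μ)) :=
  esn_activation_reduction_general μ σ ε c hμ hσ hε₂ hc
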